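/- arXiv:2403.06105 — 2 statements merged into one kernel-verified Lean document; each statement's English description precedes it below -/
import Mathlib

section
/- Let A be an invertible real n×n matrix, let (M_u)_{u∈ℕ} be a sequence of invertible n×n integer matrices with M_u/u → A entrywise as u → ∞, and let (ω_u) be a sequence in ℝⁿ with ω_u → ω. Fix z ∈ ℤⁿ and set w(u) = (M_uᵀ)⁻¹(z − ω_u/(2π)) and w = (Aᵀ)⁻¹(z − ω/(2π)). Then the rescaled discrete eigenvalues converge to the continuous eigenvalue: lim_{u→∞} 4u² ∑_{k=1}^n sin²(π w(u)_k) = 4π²‖w‖². (This expresses that u²·Spec(L_{DTⁿ_u}) converges to Spec(L_{ℝTⁿ}) for a converging family of discrete tori with converging torsion.) -/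
/-!
Since `u • w(u) = ((u⁻¹ • M_u)ᵀ)⁻¹ *ᵥ (z - ω_u / 2π)` and matrix inversion is continuous
at the invertible matrix `Aᵀ`, the rescaled vectors `u • w(u)` converge to `w`. In particular
`w(u) → 0`, so `u sin (π w(u)_k) = π u w(u)_k · sinc (π w(u)_k) → π w_k`; squaring and
summing over `k` gives the limit.
-/

open Real Matrix Filter Topology

theorem Matrix.inv_smul_of_ne_zero {n K : Type*} [Fintype n] [DecidableEq n] [Field K]
    {c : K} (hc : c ≠ 0) (A : Matrix n n K) : (c • A)⁻¹ = c⁻¹ • A⁻¹ := by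
  by_cases hA : IsUnit A.det
  · exact inv_eq_left_inv (by simp [smul_smul, hc, nonsing_inv_mul _ hA])
  · have hcA : ¬IsUnit (c • A).det := by
      rw [det_smul, IsUnit.mul_iff]
      exact fun h => hA h.2
    rw [nonsing_inv_apply_not_isUnit _ hA, nonsing_inv_apply_not_isUnit _ hcA, smul_zero]

theorem Matrix.continuousAt_inv_of_isUnit_det {n K : Type*} [Fintype n] [DecidableEq n]
    [Field K] [TopologicalSpace K] [IsTopologicalDivisionRing K]
    {A : Matrix n n K} (hA : IsUnit A.det) : ContinuousAt Inv.inv A :=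
  continuousAt_matrix_inv A <| by
    rw [Ring.inverse_eq_inv']
    exact continuousAt_inv₀ hA.ne_zero

theorem Matrix.tendsto_smul_inv_mulVec {α n K : Type*} [Fintype n] [DecidableEq n] [Field K]
    [TopologicalSpace K] [IsTopologicalDivisionRing K] {l : Filter α}
    {c : α → K} {X : α → Matrix n n K} {A : Matrix n n K}
    {v : α → n → K} {v₀ : n → K}
    (hc : ∀ᶠ a in l, c a ≠ 0) (hA : IsUnit A.det)
    (hX : Tendsto (fun a => (c a)⁻¹ • X a) l (𝓝 A)) (hv : Tendsto v l (𝓝 v₀)) :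
    Tendsto (fun a => c a • ((X a)⁻¹ *ᵥ v a)) l (𝓝 (A⁻¹ *ᵥ v₀)) := by
  have hinv : Tendsto (fun a => ((c a)⁻¹ • X a)⁻¹) l (𝓝 A⁻¹) :=
    (continuousAt_inv_of_isUnit_det hA).tendsto.comp hX
  refine ((continuous_fst.matrix_mulVec continuous_snd).continuousAt.tendsto.comp
    (hinv.prodMk_nhds hv)).congr' ?_
  filter_upwards [hc] with a ha
  simp [inv_smul_of_ne_zero (inv_ne_zero ha), smul_mulVec]

theorem Real.sin_eq_mul_sinc (x : ℝ) : sin x = x * sinc x := by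
  rcases eq_or_ne x 0 with rfl | hx
  · simp
  · rw [sinc_of_ne_zero hx, mul_div_cancel₀ _ hx]

theorem Filter.Tendsto.mul_sin {α : Type*} {l : Filter α} {f x : α → ℝ} {L : ℝ}
    (hf : Tendsto f l atTop) (hfx : Tendsto (fun a => f a * x a) l (𝓝 L)) :
    Tendsto (fun a => f a * sin (x a)) l (𝓝 L) := by
  have hx : Tendsto x l (𝓝 0) := by
    refine (hfx.div_atTop hf).congr' ?_
    filter_upwards [hf.eventually_gt_atTop 0] with a ha
    field_simp
  have hsinc : Tendsto (fun a => sinc (x a)) l (𝓝 1) :=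
    sinc_zero ▸ (continuous_sinc.tendsto 0).comp hx
  simpa [sin_eq_mul_sinc, mul_assoc] using hfx.mul hsinc

theorem discrete_tori_eigenvalue_convergence_general
    (n : ℕ) (A : Matrix (Fin n) (Fin n) ℝ) (hA : IsUnit A.det)
    (M : ℕ → Matrix (Fin n) (Fin n) ℤ)
    (hMA : ∀ i j, Tendsto (fun u : ℕ => (((M u) i j : ℝ)) / u) atTop (nhds (A i j)))
    (ω : ℕ → Fin n → ℝ) (ω₀ : Fin n → ℝ) (hω : Tendsto ω atTop (nhds ω₀))
    (z : Fin n → ℤ)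
    (w : ℕ → Fin n → ℝ)
    (hw : ∀ u, w u = (((M u).map (Int.cast : ℤ → ℝ)).transpose)⁻¹.mulVec
        fun k => (z k : ℝ) - ω u k / (2 * Real.pi))
    (w₀ : Fin n → ℝ)
    (hw₀ : w₀ = A.transpose⁻¹.mulVec fun k => (z k : ℝ) - ω₀ k / (2 * Real.pi)) :
    Tendsto (fun u : ℕ => 4 * (u : ℝ) ^ 2 * ∑ k, Real.sin (Real.pi * w u k) ^ 2)
      atTop (nhds (4 * Real.pi ^ 2 * ∑ k, w₀ k ^ 2)) := by
  have hMAt : Tendsto (fun u : ℕ => (u : ℝ)⁻¹ • ((M u).map (Int.cast : ℤ → ℝ))ᵀ) atTop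
      (𝓝 Aᵀ) :=
    tendsto_pi_nhds.2 fun i => tendsto_pi_nhds.2 fun j => by
      simpa [div_eq_inv_mul] using hMA j i
  have hv : Tendsto (fun u k => (z k : ℝ) - ω u k / (2 * π)) atTop
      (𝓝 fun k => (z k : ℝ) - ω₀ k / (2 * π)) :=
    tendsto_pi_nhds.2 fun k => tendsto_const_nhds.sub ((tendsto_pi_nhds.1 hω k).div_const _)
  have hscaled : Tendsto (fun u : ℕ => (u : ℝ) • w u) atTop (𝓝 w₀) := by
    simp only [hw, hw₀]
    exact tendsto_smul_inv_mulVec ((eventually_ne_atTop 0).mono fun u hu => Nat.cast_ne_zero.2 hu)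
      (by rwa [det_transpose]) hMAt hv
  have hsin (k : Fin n) :
      Tendsto (fun u : ℕ => (u : ℝ) * sin (π * w u k)) atTop (𝓝 (π * w₀ k)) :=
    tendsto_natCast_atTop_atTop.mul_sin <| by
      simpa [mul_left_comm] using ((tendsto_pi_nhds.1 hscaled k).const_mul π)
  have hsum := tendsto_finsetSum Finset.univ fun k _ => ((hsin k).pow 2).const_mul 4
  convert hsum using 1
  · ext u
    simp only [Finset.mul_sum, mul_pow]
    ring_nf
  · simp only [Finset.mul_sum, mul_pow]
    ring_nf

/-- convergence of rescaled connection-Laplacian eigenvalues of a converging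
family of discrete tori `ℤⁿ/M_uℤⁿ` (with `M_u/u → A` and torsion data `ω_u → ω`) to the
corresponding eigenvalue of the connection Laplacian on the real torus `ℝⁿ/Aℤⁿ`:
`4u² ∑_k sin²(π w(u)_k) → 4π²‖w‖²` where `w(u) = (M_uᵀ)⁻¹(z - ω_u/(2π))` and
`w = (Aᵀ)⁻¹(z - ω/(2π))`. -/
theorem discrete_tori_eigenvalue_convergence
    (n : ℕ) (A : Matrix (Fin n) (Fin n) ℝ) (hA : IsUnit A.det)
    (M : ℕ → Matrix (Fin n) (Fin n) ℤ) (hM : ∀ u, (M u).det ≠ 0)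
    (hMA : ∀ i j, Tendsto (fun u : ℕ => (((M u) i j : ℝ)) / u) atTop (nhds (A i j)))
    (ω : ℕ → Fin n → ℝ) (ω₀ : Fin n → ℝ) (hω : Tendsto ω atTop (nhds ω₀))
    (z : Fin n → ℤ)
    (w : ℕ → Fin n → ℝ)
    (hw : ∀ u, w u = (((M u).map (Int.cast : ℤ → ℝ)).transpose)⁻¹.mulVec
        fun k => (z k : ℝ) - ω u k / (2 * Real.pi))
    (w₀ : Fin n → ℝ)
    (hw₀ : w₀ = A.transpose⁻¹.mulVec fun k => (z k : ℝ) - ω₀ k / (2 * Real.pi)) :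
    Tendsto (fun u : ℕ => 4 * (u : ℝ) ^ 2 * ∑ k, Real.sin (Real.pi * w u k) ^ 2)
      atTop (nhds (4 * Real.pi ^ 2 * ∑ k, w₀ k ^ 2)) :=
  discrete_tori_eigenvalue_convergence_general n A hA M hMA ω ω₀ hω z w hw w₀ hw₀
end

section
/- Let t > 0, let (v_u)_{u∈ℕ} be a sequence of integers, and let I_m(s) = (1/π)∫₀^π e^{s cos θ} cos(mθ) dθ. (i) If v_u/u → a as u → ∞ for some real a > 0, then lim_{u→∞} v_u e^{−2u²t} I_{v_u}(2u²t) = (a/√(4πt)) e^{−a²/(4t)}. (ii) If the sequence (v_u) is bounded, then lim_{u→∞} u e^{−2u²t} I_{v_u}(2u²t) = 1/√(4πt). -/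
/-!
Substituting `θ = x / u` turns `u e^{-s} I_m(s)` with `s = 2u²t` into
`(1/π) ∫₀^{uπ} e^{2u²t (cos (x/u) - 1)} cos (m x / u) dx`. The exponent tends to `-t x²` and, by
`cos y ≤ 1 - 2y²/π²` on `[-π, π]`, stays below `-(4t/π²) x²`, so dominated convergence gives the
limit `(1/π) ∫₀^∞ e^{-t x²} cos (b x) dx = e^{-b²/(4t)} / √(4πt)` whenever `v_u / u → b`.
Part (i) multiplies this by `v_u / u → a`; part (ii) is the case `b = 0`.
-/

open Real Filter

/-- The modified Bessel function of integer order `m`: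
`I_m(s) = (1/π)∫₀^π e^{s cos θ} cos(mθ) dθ`. -/
noncomputable def besselI (m : ℤ) (s : ℝ) : ℝ :=
  (1 / Real.pi) * ∫ θ in (0:ℝ)..Real.pi, Real.exp (s * Real.cos θ) * Real.cos (m * θ)

open MeasureTheory Set Topology

lemma sq_mul_cos_div_sub_one {c : ℝ} (hc : c ≠ 0) (x : ℝ) :
    c ^ 2 * (cos (x / c) - 1) = -(x ^ 2 / 2) * sinc (x / (2 * c)) ^ 2 := by
  rcases eq_or_ne x 0 with rfl | hx
  · simp
  have half : x / c = 2 * (x / (2 * c)) := by field_simp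
  rw [sinc_of_ne_zero (by positivity), half, cos_two_mul, cos_sq']
  field_simp
  ring

lemma tendsto_sq_mul_cos_div_sub_one (x : ℝ) :
    Tendsto (fun c : ℝ => c ^ 2 * (cos (x / c) - 1)) atTop (𝓝 (-(x ^ 2 / 2))) := by
  have hsinc : Tendsto (fun c : ℝ => sinc (x / (2 * c))) atTop (𝓝 1) := by
    rw [← sinc_zero]
    refine continuous_sinc.continuousAt.tendsto.comp ?_
    simpa [div_mul_eq_div_div] using (tendsto_const_nhds (x := x / 2)).div_atTop tendsto_id
  have := (hsinc.pow 2).const_mul (-(x ^ 2 / 2))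
  rw [one_pow, mul_one] at this
  refine this.congr' ?_
  filter_upwards [eventually_ne_atTop 0] with c hc
  rw [sq_mul_cos_div_sub_one hc]

noncomputable def rescaledBesselIntegrand (t c m x : ℝ) : ℝ :=
  exp (2 * c ^ 2 * t * (cos (x / c) - 1)) * cos (m * (x / c))

lemma continuous_rescaledBesselIntegrand (t c m : ℝ) :
    Continuous (rescaledBesselIntegrand t c m) := by
  unfold rescaledBesselIntegrand
  fun_prop

lemma mul_exp_neg_mul_besselI_eq_setIntegral (t : ℝ) (m : ℤ) {c : ℝ} (hc : 0 < c) :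
    c * (exp (-2 * c ^ 2 * t) * besselI m (2 * c ^ 2 * t)) =
      (1 / π) * ∫ x in Ioc 0 (c * π), rescaledBesselIntegrand t c m x := by
  have shift : exp (-2 * c ^ 2 * t) * besselI m (2 * c ^ 2 * t) =
      (1 / π) * ∫ θ in (0:ℝ)..π, exp (2 * c ^ 2 * t * (cos θ - 1)) * cos (m * θ) := by
    rw [besselI, mul_left_comm, ← intervalIntegral.integral_const_mul]
    congr 2 with θ
    rw [← mul_assoc, ← exp_add]
    ring_nf
  have rescale := intervalIntegral.integral_comp_div
    (fun θ => exp (2 * c ^ 2 * t * (cos θ - 1)) * cos (m * θ)) hc.ne' (a := 0) (b := c * π)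
  rw [zero_div, mul_div_cancel_left₀ _ hc.ne', smul_eq_mul] at rescale
  rw [shift, ← intervalIntegral.integral_of_le (by positivity), mul_left_comm]
  exact congrArg _ rescale.symm

lemma abs_rescaledBesselIntegrand_le {t c x : ℝ} (ht : 0 ≤ t) (hc : 0 < c) (hx₀ : 0 ≤ x)
    (hx : x ≤ c * π) (m : ℝ) :
    |rescaledBesselIntegrand t c m x| ≤ exp (-(4 * t / π ^ 2) * x ^ 2) := by
  have hxc : |x / c| ≤ π := by
    rw [abs_of_nonneg (by positivity), div_le_iff₀ hc, mul_comm]; exact hx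
  have hcos := cos_le_one_sub_mul_cos_sq hxc
  have hexp : 2 * c ^ 2 * t * (cos (x / c) - 1) ≤ -(4 * t / π ^ 2) * x ^ 2 := by
    calc 2 * c ^ 2 * t * (cos (x / c) - 1)
        ≤ 2 * c ^ 2 * t * (-(2 / π ^ 2) * (x / c) ^ 2) := by gcongr; linarith
      _ = -(4 * t / π ^ 2) * x ^ 2 := by field_simp; ring
  rw [rescaledBesselIntegrand, abs_mul, abs_exp]
  calc exp (2 * c ^ 2 * t * (cos (x / c) - 1)) * |cos (m * (x / c))|
      ≤ exp (2 * c ^ 2 * t * (cos (x / c) - 1)) :=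
        mul_le_of_le_one_right (exp_nonneg _) (abs_cos_le_one _)
    _ ≤ _ := exp_le_exp.mpr hexp

lemma tendsto_rescaledBesselIntegrand {α : Type*} {l : Filter α} {c m : α → ℝ} {b : ℝ}
    (hc : Tendsto c l atTop) (hm : Tendsto (fun i => m i / c i) l (𝓝 b)) (t x : ℝ) :
    Tendsto (fun i => rescaledBesselIntegrand t (c i) (m i) x) l
      (𝓝 (exp (-t * x ^ 2) * cos (b * x))) := by
  have hexp : Tendsto (fun i => 2 * c i ^ 2 * t * (cos (x / c i) - 1)) l (𝓝 (-t * x ^ 2)) := by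
    convert ((tendsto_sq_mul_cos_div_sub_one x).comp hc).const_mul (2 * t) using 2 with i
    · simp only [Function.comp_apply]; ring
    · ring
  have hcos : Tendsto (fun i => m i * (x / c i)) l (𝓝 (b * x)) := by
    simpa only [mul_div_assoc', div_mul_eq_mul_div] using hm.mul_const x
  exact ((continuous_exp.tendsto _).comp hexp).mul ((continuous_cos.tendsto _).comp hcos)

lemma tendsto_indicator_Ioc_of_tendsto {α : Type*} {l : Filter α} {c : α → ℝ} {g : α → ℝ → ℝ}
    {f : ℝ → ℝ} {x : ℝ} (hc : Tendsto c l atTop) (hg : Tendsto (fun i => g i x) l (𝓝 (f x))) :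
    Tendsto (fun i => (Ioc 0 (c i)).indicator (g i) x) l (𝓝 ((Ioi 0).indicator f x)) := by
  by_cases hx : 0 < x
  · rw [indicator_of_mem (mem_Ioi.mpr hx)]
    refine hg.congr' ?_
    filter_upwards [hc.eventually_ge_atTop x] with i hi
    rw [indicator_of_mem (show x ∈ Ioc 0 (c i) from ⟨hx, hi⟩)]
  · rw [indicator_of_notMem (mt mem_Ioi.mp hx)]
    simp only [indicator_of_notMem (fun h : x ∈ Ioc 0 _ => hx h.1), tendsto_const_nhds]

lemma integral_exp_neg_mul_sq_mul_cos {t : ℝ} (ht : 0 < t) (b : ℝ) :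
    ∫ x, exp (-t * x ^ 2) * cos (b * x) = sqrt (π / t) * exp (-b ^ 2 / (4 * t)) := by
  have hneg : (-(t : ℂ)).re < 0 := by simpa using ht
  have hre (x : ℝ) : (Complex.exp (-(t : ℂ) * x ^ 2 + (b * Complex.I) * x + 0)).re =
      exp (-t * x ^ 2) * cos (b * x) := by
    rw [Complex.exp_re]
    simp [← Complex.ofReal_pow]
  have hsqrt : ((π : ℂ) / -(-(t : ℂ))) ^ (1 / 2 : ℂ) = (sqrt (π / t) : ℂ) := by
    rw [neg_neg, sqrt_eq_rpow, ← Complex.ofReal_div, Complex.ofReal_cpow (by positivity)]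
    norm_num
  have hexp : Complex.exp (0 - (b * Complex.I) ^ 2 / (4 * -(t : ℂ))) =
      (exp (-b ^ 2 / (4 * t)) : ℂ) := by
    rw [Complex.ofReal_exp]
    congr 1
    rw [mul_pow, Complex.I_sq]
    push_cast
    ring
  have hint := integral_re (integrable_cexp_quadratic' hneg (b * Complex.I) 0)
  simp only [RCLike.re_to_complex] at hint
  simp_rw [← hre]
  rw [hint, integral_cexp_quadratic hneg, hsqrt, hexp, ← Complex.ofReal_mul, Complex.ofReal_re]

lemma integral_Ioi_exp_neg_mul_sq_mul_cos {t : ℝ} (ht : 0 < t) (b : ℝ) :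
    ∫ x in Ioi 0, exp (-t * x ^ 2) * cos (b * x) = sqrt (π / t) / 2 * exp (-b ^ 2 / (4 * t)) := by
  have heven (x : ℝ) : exp (-t * |x| ^ 2) * cos (b * |x|) = exp (-t * x ^ 2) * cos (b * x) := by
    rcases abs_choice x with h | h <;> simp [h]
  have := integral_comp_abs (f := fun x => exp (-t * x ^ 2) * cos (b * x))
  simp only [heven, integral_exp_neg_mul_sq_mul_cos ht] at this
  linarith

lemma one_div_pi_mul_sqrt_pi_div_div_two (t : ℝ) :
    1 / π * (sqrt (π / t) / 2) = 1 / sqrt (4 * π * t) := by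
  have hsqrt : sqrt (4 * π * t) = 2 * sqrt π * sqrt t := by
    rw [sqrt_mul (by positivity), sqrt_mul (by norm_num), show (4 : ℝ) = 2 ^ 2 by norm_num,
      sqrt_sq zero_le_two]
  have hπ : π = sqrt π * sqrt π := (mul_self_sqrt pi_pos.le).symm
  have : sqrt π ≠ 0 := (sqrt_pos.mpr pi_pos).ne'
  rw [hsqrt, sqrt_div pi_pos.le]
  nth_rewrite 1 [hπ]
  field_simp

lemma tendsto_mul_exp_neg_mul_besselI {t b : ℝ} (ht : 0 < t) {v : ℕ → ℤ}
    (hv : Tendsto (fun u : ℕ => (v u : ℝ) / u) atTop (𝓝 b)) :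
    Tendsto (fun u : ℕ =>
        (u : ℝ) * (exp (-2 * (u : ℝ) ^ 2 * t) * besselI (v u) (2 * (u : ℝ) ^ 2 * t)))
      atTop (𝓝 (exp (-b ^ 2 / (4 * t)) / sqrt (4 * π * t))) := by
  have hu : Tendsto (fun u : ℕ => (u : ℝ)) atTop atTop := tendsto_natCast_atTop_atTop
  have hdom : ∀ u : ℕ, ∀ᵐ x, ‖(Ioc 0 (u * π)).indicator (rescaledBesselIntegrand t u (v u)) x‖ ≤
      exp (-(4 * t / π ^ 2) * x ^ 2) := by
    refine fun u => ae_of_all _ fun x => ?_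
    by_cases hx : x ∈ Ioc 0 (u * π)
    · have hu₀ : (0 : ℝ) < u := pos_of_mul_pos_left (hx.1.trans_le hx.2) pi_pos.le
      rw [indicator_of_mem hx, norm_eq_abs]
      exact abs_rescaledBesselIntegrand_le ht.le hu₀ hx.1.le hx.2 _
    · rw [indicator_of_notMem hx, norm_zero]
      positivity
  have hlim := tendsto_integral_of_dominated_convergence _
    (fun u => (continuous_rescaledBesselIntegrand t u (v u)).aestronglyMeasurable.indicator
      measurableSet_Ioc)
    (integrable_exp_neg_mul_sq (by positivity)) hdom
    (ae_of_all _ fun x => tendsto_indicator_Ioc_of_tendsto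
      (f := fun x => exp (-t * x ^ 2) * cos (b * x)) (hu.atTop_mul_const pi_pos)
      (tendsto_rescaledBesselIntegrand hu hv t x))
  rw [integral_indicator measurableSet_Ioi, integral_Ioi_exp_neg_mul_sq_mul_cos ht] at hlim
  rw [div_eq_mul_one_div, mul_comm, ← one_div_pi_mul_sqrt_pi_div_div_two t, mul_assoc]
  refine (hlim.const_mul (1 / π)).congr' ?_
  filter_upwards [eventually_gt_atTop 0] with u hu
  rw [mul_exp_neg_mul_besselI_eq_setIntegral _ _ (Nat.cast_pos.mpr hu),
    integral_indicator measurableSet_Ioc]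

lemma tendsto_div_natCast_of_abs_le {v : ℕ → ℤ} {C : ℤ} (hC : ∀ u, |v u| ≤ C) :
    Tendsto (fun u : ℕ => (v u : ℝ) / u) atTop (𝓝 0) := by
  simp only [div_eq_mul_inv]
  refine isBoundedUnder_le_mul_tendsto_zero ⟨C, ?_⟩ tendsto_inv_atTop_nhds_zero_nat
  simp only [eventually_map, Function.comp_apply, norm_eq_abs]
  exact Eventually.of_forall fun u => by exact_mod_cast hC u

/-- pointwise limits of rescaled discrete heat kernel factors on `ℤ`.
(i) If `v_u/u → a > 0`, then `v_u e^{-2u²t} I_{v_u}(2u²t) → (a/√(4πt)) e^{-a²/(4t)}`.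
(ii) If `(v_u)` is bounded, then `u e^{-2u²t} I_{v_u}(2u²t) → 1/√(4πt)`. -/
theorem rescaled_bessel_heat_kernel_limits
    (t : ℝ) (ht : 0 < t) (v : ℕ → ℤ) :
    (∀ a : ℝ, 0 < a → Tendsto (fun u : ℕ => (v u : ℝ) / u) atTop (nhds a) →
      Tendsto (fun u : ℕ =>
          (v u : ℝ) * (Real.exp (-2 * (u : ℝ) ^ 2 * t) * besselI (v u) (2 * (u : ℝ) ^ 2 * t)))
        atTop
        (nhds (a / Real.sqrt (4 * Real.pi * t) * Real.exp (-a ^ 2 / (4 * t))))) ∧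
    ((∃ C : ℤ, ∀ u : ℕ, |v u| ≤ C) →
      Tendsto (fun u : ℕ =>
          (u : ℝ) * (Real.exp (-2 * (u : ℝ) ^ 2 * t) * besselI (v u) (2 * (u : ℝ) ^ 2 * t)))
        atTop
        (nhds (1 / Real.sqrt (4 * Real.pi * t)))) := by
  refine ⟨fun a _ ha => ?_, fun ⟨C, hC⟩ => ?_⟩
  · have h := ha.mul (tendsto_mul_exp_neg_mul_besselI ht ha)
    rw [div_mul_eq_mul_div, mul_div_assoc]
    refine h.congr' ?_
    filter_upwards [eventually_ne_atTop 0] with u hu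
    field_simp
  · simpa using tendsto_mul_exp_neg_mul_besselI ht (tendsto_div_natCast_of_abs_le hC)
end
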